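/- Fault detectability sufficient condition: with the error dynamics ε(t+1) = λ ε(t) + u(t) + φ(t) for t ≥ T₀ where |u(t)| ≤ ū(t), threshold ε̄(t+1) = λ ε̄(t) + ū(t), ε̄(T₀) ≥ |ε(T₀)|, and λ ∈ (0,1): if at some time t₁ > T₀ we have |Σ_{h=T₀}^{t₁−1} λ^{t₁−1−h} φ(h)| > 2 ε̄(t₁), then |ε(t₁)| > ε̄(t₁), i.e. the fault is detected. -/

import Mathlib

/-!
Subtracting the fault's forced response `Σ_{h=T₀}^{t-1} λ^(t-1-h) φ(h)` from `ε` leaves an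
error driven by `u` alone, which the threshold dominates by induction. The reverse triangle
inequality then gives `|ε(t₁)| ≥ |forced response| - ε̄(t₁) > ε̄(t₁)`.
-/

open Finset

/-- The response at time `t` of `x(s+1) = λ x(s) + φ(s)` started from `x(T₀) = 0`. -/
def forcedResponse {R : Type*} [CommSemiring R] (lam : R) (φ : ℕ → R) (T₀ t : ℕ) : R :=
  ∑ h ∈ Ico T₀ t, lam ^ (t - 1 - h) * φ h

theorem forcedResponse_succ {R : Type*} [CommSemiring R] (lam : R) (φ : ℕ → R) {T₀ n : ℕ}
    (hn : T₀ ≤ n) :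
    forcedResponse lam φ T₀ (n + 1) = lam * forcedResponse lam φ T₀ n + φ n := by
  unfold forcedResponse
  rw [sum_Ico_succ_top hn, Nat.add_sub_cancel, Nat.sub_self, pow_zero, one_mul, mul_sum]
  congr 1
  refine sum_congr rfl fun h hh => ?_
  rw [show n - h = n - 1 - h + 1 by grind, pow_succ]
  ring

theorem abs_le_of_recurrence_le {lam : ℝ} (hlam : 0 ≤ lam) {T₀ : ℕ} {e b u ubar : ℕ → ℝ}
    (hu : ∀ t, |u t| ≤ ubar t)
    (he : ∀ t, T₀ ≤ t → e (t + 1) = lam * e t + u t)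
    (hb : ∀ t, T₀ ≤ t → b (t + 1) = lam * b t + ubar t)
    (h0 : |e T₀| ≤ b T₀) {t : ℕ} (ht : T₀ ≤ t) :
    |e t| ≤ b t := by
  induction t, ht using Nat.le_induction with
  | base => exact h0
  | succ n hn ih =>
    calc |e (n + 1)| = |lam * e n + u n| := by rw [he n hn]
      _ ≤ |lam| * |e n| + |u n| := by rw [← abs_mul]; exact abs_add_le _ _
      _ ≤ lam * b n + ubar n := by
        rw [abs_of_nonneg hlam]; gcongr; exact hu n
      _ = b (n + 1) := (hb n hn).symm

theorem fault_detectability_general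
    (lam : ℝ) (hlam0 : 0 < lam)
    (T₀ t₁ : ℕ) (ht₁ : T₀ < t₁)
    (ε εbar u ubar φ : ℕ → ℝ)
    (hu : ∀ t, |u t| ≤ ubar t)
    (hε : ∀ t, T₀ ≤ t → ε (t + 1) = lam * ε t + u t + φ t)
    (hεbar : ∀ t, T₀ ≤ t → εbar (t + 1) = lam * εbar t + ubar t)
    (h0 : |ε T₀| ≤ εbar T₀)
    (hfault : |∑ h ∈ Finset.Ico T₀ t₁, lam ^ (t₁ - 1 - h) * φ h| > 2 * εbar t₁) :
    |ε t₁| > εbar t₁ := by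
  set S := forcedResponse lam φ T₀
  have hfree : |ε t₁ - S t₁| ≤ εbar t₁ := by
    refine abs_le_of_recurrence_le (e := fun t => ε t - S t) hlam0.le hu (fun t ht => ?_) hεbar ?_ ht₁.le
    · rw [hε t ht, show S (t + 1) = lam * S t + φ t from forcedResponse_succ lam φ ht]
      ring
    · simpa [S, forcedResponse] using h0
  have hrev : |S t₁| - |ε t₁| ≤ |ε t₁ - S t₁| := by
    rw [abs_sub_comm]; exact abs_sub_abs_le_abs_sub _ _
  change |S t₁| > 2 * εbar t₁ at hfault
  linarith

/-- Fault detectability sufficient condition: with error dynamics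
`ε(t+1) = λ ε(t) + u(t) + φ(t)` for `t ≥ T₀`, `|u(t)| ≤ ū(t)`, threshold
`ε̄(t+1) = λ ε̄(t) + ū(t)`, `ε̄(T₀) ≥ |ε(T₀)|`, `λ ∈ (0,1)`:
if `|Σ_{h=T₀}^{t₁-1} λ^(t₁-1-h) φ(h)| > 2 ε̄(t₁)` at some `t₁ > T₀`, then
`|ε(t₁)| > ε̄(t₁)`, i.e. the fault is detected. -/
theorem fault_detectability
    (lam : ℝ) (hlam0 : 0 < lam) (hlam1 : lam < 1)
    (T₀ t₁ : ℕ) (ht₁ : T₀ < t₁)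
    (ε εbar u ubar φ : ℕ → ℝ)
    (hu : ∀ t, |u t| ≤ ubar t)
    (hε : ∀ t, T₀ ≤ t → ε (t + 1) = lam * ε t + u t + φ t)
    (hεbar : ∀ t, T₀ ≤ t → εbar (t + 1) = lam * εbar t + ubar t)
    (h0 : |ε T₀| ≤ εbar T₀)
    (hfault : |∑ h ∈ Finset.Ico T₀ t₁, lam ^ (t₁ - 1 - h) * φ h| > 2 * εbar t₁) :
    |ε t₁| > εbar t₁ :=
  fault_detectability_general lam hlam0 T₀ t₁ ht₁ ε εbar u ubar φ hu hε hεbar h0 hfault
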